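/- For a planar grid diagram G with O-markings O and X-markings X, one has J(O − X, O − X) = b(G) − Wr(G), where Wr(G) is the writhe of the knot projection determined by G and b(G) is the bridge index of G, i.e. the number of markings that are local maxima of the antidiagonal height function on the projection. -/
import Mathlib


/-!
STATEMENT 18 (Lemma 5.8): for a planar grid diagram `G` with `O`-markings `O` and
`X`-markings `X`, one has `J(O − X, O − X) = b(G) − Wr(G)`, where `Wr(G)` is the writhe
of the knot projection determined by `G` and `b(G)` is the bridge index of `G`, the
number of markings that are local maxima of the antidiagonal height function on the
projection.

This statement is formalized concretely.  A planar grid diagram of index `n` is encoded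
by two permutations `σO, σX` of `Fin n`: the `O`-marking in column `c` lies in row
`σO c`, and the `X`-marking in column `c` lies in row `σX c` (so there is exactly one
marking of each kind in every row and column); markings occupy distinct squares.  The
associated projection joins the two markings in each row by a horizontal segment and the
two markings in each column by a vertical segment, the vertical segments crossing over
the horizontal ones; the link is oriented by running from the `X`- to the `O`-marking in
each column and from the `O`- to the `X`-marking in each row.  A crossing occurs between
the vertical segment of column `c` and the horizontal segment of row `r` exactly when
`r` lies strictly between the rows of the markings of column `c` and `c` lies strictly
between the columns of the markings of row `r`; its sign is `−1` when the vertical and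
the horizontal strands are directed toward increasing (or both toward decreasing)
coordinates, and `+1` otherwise (the standard sign convention for a crossing whose
over-strand is vertical).  A marking is a local maximum of the antidiagonal height
function iff the other marking in its row lies in a smaller column and the other marking
in its column lies in a greater row.
-/

open Finset

/-- A planar grid diagram of grid index `n`: the `O`-marking of column `c` is in row
`σO c` and the `X`-marking of column `c` is in row `σX c`; markings occupy distinct
squares. -/
structure PlanarGridDiagram (n : ℕ) where
  σO : Equiv.Perm (Fin n)
  σX : Equiv.Perm (Fin n)
  distinct : ∀ c : Fin n, σO c ≠ σX c

namespace PlanarGridDiagram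

variable {n : ℕ} (G : PlanarGridDiagram n)

/-- The set of `O`-markings, as points of the plane. -/
def Opoints : Finset (ℤ × ℤ) :=
  Finset.univ.image fun c : Fin n => ((c : ℤ), (G.σO c : ℤ))

/-- The set of `X`-markings, as points of the plane. -/
def Xpoints : Finset (ℤ × ℤ) :=
  Finset.univ.image fun c : Fin n => ((c : ℤ), (G.σX c : ℤ))

/-- `I(P,Q)`: the number of pairs `p ∈ P`, `q ∈ Q` with both coordinates of `p` strictly
smaller than the corresponding coordinates of `q`. -/
def Icount (P Q : Finset (ℤ × ℤ)) : ℕ :=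
  ((P ×ˢ Q).filter fun pq => pq.1.1 < pq.2.1 ∧ pq.1.2 < pq.2.2).card

/-- The symmetrized count `J(P,Q) = (I(P,Q) + I(Q,P))/2`. -/
def Jcount (P Q : Finset (ℤ × ℤ)) : ℚ :=
  ((Icount P Q : ℚ) + (Icount Q P : ℚ)) / 2

/-- `J(O − X, O − X) = J(O,O) − 2J(O,X) + J(X,X)`, the bilinear extension of `J` to the
formal difference `O − X`. -/
def JOX : ℚ :=
  Jcount G.Opoints G.Opoints - 2 * Jcount G.Opoints G.Xpoints
    + Jcount G.Xpoints G.Xpoints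

/-- The bridge index `b(G)`: the number of markings which are local maxima of the
antidiagonal height function, i.e. markings whose row-partner lies in a smaller column
and whose column-partner lies in a greater row. -/
def bridgeIndex : ℕ :=
  (Finset.univ.filter fun c : Fin n =>
      G.σX.symm (G.σO c) < c ∧ G.σO c < G.σX c).card +
  (Finset.univ.filter fun c : Fin n =>
      G.σO.symm (G.σX c) < c ∧ G.σX c < G.σO c).card

/-- The writhe `Wr(G)` of the projection determined by `G`: the sum of the signs of its
crossings.  The vertical segment of column `c` and the horizontal segment of row `r`
cross exactly when `r` is strictly between the rows of the two markings of column `c`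
and `c` is strictly between the columns of the two markings of row `r`; the sign is `−1`
iff the two strands (vertical oriented from the `X`- to the `O`-marking, horizontal from
the `O`- to the `X`-marking) both run towards increasing, or both towards decreasing,
coordinates. -/
def writhe : ℤ :=
  ∑ c : Fin n, ∑ r : Fin n,
    if (min (G.σX c) (G.σO c) < r ∧ r < max (G.σX c) (G.σO c)) ∧
        (min (G.σO.symm r) (G.σX.symm r) < c ∧ c < max (G.σO.symm r) (G.σX.symm r)) then
      (if (G.σX c < G.σO c) ↔ (G.σO.symm r < G.σX.symm r) then -1 else 1)
    else 0


private lemma keyCellNat (a b u v c r : ℕ) (h1 : a = r ↔ u = c) (h2 : b = r ↔ v = c) :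
    ((if a < r then (1 : ℤ) else 0) - (if b < r then 1 else 0)) *
      ((if c < u then 1 else 0) - (if c < v then 1 else 0))
    = ((if b < a ∧ r = a ∧ c < v then 1 else 0) +
       (if a < b ∧ r = b ∧ c < u then 1 else 0))
      - (if ((b < r ∨ a < r) ∧ (r < b ∨ r < a)) ∧ ((u < c ∨ v < c) ∧ (c < u ∨ c < v)) then
          (if b < a ↔ u < v then (-1 : ℤ) else 1) else 0) := by
  split_ifs <;> omega

private lemma keyCellFin {n : ℕ} (a b u v c r : Fin n)
    (h1 : a = r ↔ u = c) (h2 : b = r ↔ v = c) :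
    ((if a < r then (1 : ℤ) else 0) - (if b < r then 1 else 0)) *
      ((if c < u then 1 else 0) - (if c < v then 1 else 0))
    = ((if b < a ∧ r = a ∧ c < v then 1 else 0) +
       (if a < b ∧ r = b ∧ c < u then 1 else 0))
      - (if (min b a < r ∧ r < max b a) ∧ (min u v < c ∧ c < max u v) then
          (if b < a ↔ u < v then (-1 : ℤ) else 1) else 0) := by
  have h := keyCellNat a.val b.val u.val v.val c.val r.val
    (by simpa [Fin.ext_iff] using h1) (by simpa [Fin.ext_iff] using h2)
  simp only [min_lt_iff, lt_max_iff, Fin.lt_def, Fin.ext_iff]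
  exact h

private lemma cellCount {α : Type*} [LinearOrder α] (x y c : α) (U V : Prop)
    [Decidable U] [Decidable V] (hUV : V ↔ ¬U) (hx : x ≠ c) (hy : y ≠ c) :
    ((if V ∧ c < x then (1 : ℤ) else 0) + (if U ∧ c < y then 1 else 0))
    = ((if x < c ∧ U then 1 else 0) + (if y < c ∧ V then 1 else 0))
      + (1 - (if x < c then 1 else 0) - (if y < c then 1 else 0)) := by
  rcases lt_or_gt_of_ne hx with h | h <;> rcases lt_or_gt_of_ne hy with h' | h' <;>
    by_cases hU : U <;> simp [h, h', hU, asymm h, asymm h', hUV]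

private lemma cardFilter_int {n : ℕ} (p : Fin n → Prop) [DecidablePred p] :
    (((Finset.univ.filter p).card : ℕ) : ℤ) = ∑ c : Fin n, (if p c then (1 : ℤ) else 0) := by
  rw [Finset.card_filter]
  push_cast
  rfl

private lemma Icount_eq {n : ℕ} (α β : Equiv.Perm (Fin n)) :
    Icount (Finset.univ.image fun c : Fin n => ((c : ℤ), (α c : ℤ)))
        (Finset.univ.image fun c : Fin n => ((c : ℤ), (β c : ℤ)))
    = ((Finset.univ ×ˢ Finset.univ).filter
        fun p : Fin n × Fin n => p.1 < p.2 ∧ α p.1 < β p.2).card := by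
  rw [Icount]
  refine (Finset.card_bij
    (fun p _ => (((p.1 : ℤ), (α p.1 : ℤ)), ((p.2 : ℤ), (β p.2 : ℤ)))) ?_ ?_ ?_).symm
  · intro p hp
    simp only [Finset.mem_filter, Finset.mem_product, Finset.mem_image, Finset.mem_univ,
      true_and] at hp ⊢
    refine ⟨⟨⟨p.1, rfl⟩, ⟨p.2, rfl⟩⟩, ?_, ?_⟩
    · exact_mod_cast hp.1
    · exact_mod_cast hp.2
  · intro p hp q hq h
    simp only [Prod.mk.injEq] at h
    obtain ⟨⟨h1, -⟩, ⟨h2, -⟩⟩ := h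
    have h1' : p.1 = q.1 := Fin.ext (by exact_mod_cast h1)
    have h2' : p.2 = q.2 := Fin.ext (by exact_mod_cast h2)
    exact Prod.ext h1' h2'
  · intro q hq
    simp only [Finset.mem_filter, Finset.mem_product, Finset.mem_image, Finset.mem_univ,
      true_and] at hq
    obtain ⟨⟨⟨c, hc⟩, ⟨d, hd⟩⟩, h1, h2⟩ := hq
    refine ⟨(c, d), ?_, ?_⟩
    · simp only [Finset.mem_filter, Finset.mem_product, Finset.mem_univ, true_and]
      rw [← hc, ← hd] at h1 h2
      dsimp only at h1 h2
      exact ⟨by rw [Fin.lt_def]; exact_mod_cast h1,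
        by rw [Fin.lt_def]; exact_mod_cast h2⟩
    · exact Prod.ext hc hd

private lemma filterCard_eq {n : ℕ} (α β : Equiv.Perm (Fin n)) :
    ((((Finset.univ ×ˢ Finset.univ).filter
        fun p : Fin n × Fin n => p.1 < p.2 ∧ α p.1 < β p.2).card : ℕ) : ℤ)
    = ∑ c : Fin n, ∑ r : Fin n,
        (if α c < r then (1 : ℤ) else 0) * (if c < β.symm r then 1 else 0) := by
  rw [Finset.card_filter]
  push_cast
  rw [Finset.sum_product]
  refine Finset.sum_congr rfl fun c _ => ?_
  rw [← Equiv.sum_comp β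
    (fun r => (if α c < r then (1 : ℤ) else 0) * (if c < β.symm r then 1 else 0))]
  refine Finset.sum_congr rfl fun d _ => ?_
  by_cases ha : c < d <;> by_cases hb : α c < β d <;> simp [ha, hb]

private lemma key_int : ((Icount G.Opoints G.Opoints : ℤ) + (Icount G.Xpoints G.Xpoints : ℤ)
      - (Icount G.Opoints G.Xpoints : ℤ) - (Icount G.Xpoints G.Opoints : ℤ))
    = (G.bridgeIndex : ℤ) - G.writhe := by
  have hO : G.Opoints = Finset.univ.image fun c : Fin n => ((c : ℤ), (G.σO c : ℤ)) := rfl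
  have hX : G.Xpoints = Finset.univ.image fun c : Fin n => ((c : ℤ), (G.σX c : ℤ)) := rfl
  rw [hO, hX, Icount_eq, Icount_eq, Icount_eq, Icount_eq, filterCard_eq, filterCard_eq,
    filterCard_eq, filterCard_eq]
  have hcombine :
      (∑ c : Fin n, ∑ r : Fin n,
          (if G.σO c < r then (1 : ℤ) else 0) * (if c < G.σO.symm r then 1 else 0))
        + (∑ c : Fin n, ∑ r : Fin n,
            (if G.σX c < r then (1 : ℤ) else 0) * (if c < G.σX.symm r then 1 else 0))
        - (∑ c : Fin n, ∑ r : Fin n,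
            (if G.σO c < r then (1 : ℤ) else 0) * (if c < G.σX.symm r then 1 else 0))
        - (∑ c : Fin n, ∑ r : Fin n,
            (if G.σX c < r then (1 : ℤ) else 0) * (if c < G.σO.symm r then 1 else 0))
      = ∑ c : Fin n, ∑ r : Fin n,
          ((if G.σO c < r then (1 : ℤ) else 0) - (if G.σX c < r then 1 else 0)) *
            ((if c < G.σO.symm r then 1 else 0) - (if c < G.σX.symm r then 1 else 0)) := by
    simp only [← Finset.sum_add_distrib, ← Finset.sum_sub_distrib]
    refine Finset.sum_congr rfl fun c _ => Finset.sum_congr rfl fun r _ => ?_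
    ring
  rw [hcombine]
  have hcell : ∀ c r : Fin n,
      ((if G.σO c < r then (1 : ℤ) else 0) - (if G.σX c < r then 1 else 0)) *
        ((if c < G.σO.symm r then 1 else 0) - (if c < G.σX.symm r then 1 else 0))
      = (((if G.σX c < G.σO c ∧ r = G.σO c ∧ c < G.σX.symm r then 1 else 0) +
          (if G.σO c < G.σX c ∧ r = G.σX c ∧ c < G.σO.symm r then 1 else 0))
        - (if (min (G.σX c) (G.σO c) < r ∧ r < max (G.σX c) (G.σO c)) ∧
              (min (G.σO.symm r) (G.σX.symm r) < c ∧
                c < max (G.σO.symm r) (G.σX.symm r)) then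
            (if G.σX c < G.σO c ↔ G.σO.symm r < G.σX.symm r then (-1 : ℤ) else 1)
          else 0)) := by
    intro c r
    refine keyCellFin (G.σO c) (G.σX c) (G.σO.symm r) (G.σX.symm r) c r ?_ ?_
    · rw [Equiv.symm_apply_eq]; exact eq_comm
    · rw [Equiv.symm_apply_eq]; exact eq_comm
  rw [Finset.sum_congr rfl fun c _ => Finset.sum_congr rfl fun r _ => hcell c r]
  simp only [Finset.sum_sub_distrib, Finset.sum_add_distrib]
  have hw : (∑ c : Fin n, ∑ r : Fin n,
      (if (min (G.σX c) (G.σO c) < r ∧ r < max (G.σX c) (G.σO c)) ∧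
          (min (G.σO.symm r) (G.σX.symm r) < c ∧ c < max (G.σO.symm r) (G.σX.symm r)) then
        (if G.σX c < G.σO c ↔ G.σO.symm r < G.σX.symm r then (-1 : ℤ) else 1) else 0))
      = G.writhe := rfl
  rw [hw]
  have hb1 : ∀ c : Fin n, (∑ r : Fin n,
      (if G.σX c < G.σO c ∧ r = G.σO c ∧ c < G.σX.symm r then (1 : ℤ) else 0))
      = (if G.σX c < G.σO c ∧ c < G.σX.symm (G.σO c) then 1 else 0) := by
    intro c
    rw [Finset.sum_eq_single (G.σO c)]
    · by_cases h : G.σX c < G.σO c ∧ c < G.σX.symm (G.σO c)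
      · simp [h]
      · simp only [if_neg h, ite_eq_right_iff]
        rintro ⟨ha, -, hb⟩
        exact absurd ⟨ha, hb⟩ h
    · intro r _ hr
      simp [hr]
    · simp
  have hb2 : ∀ c : Fin n, (∑ r : Fin n,
      (if G.σO c < G.σX c ∧ r = G.σX c ∧ c < G.σO.symm r then (1 : ℤ) else 0))
      = (if G.σO c < G.σX c ∧ c < G.σO.symm (G.σX c) then 1 else 0) := by
    intro c
    rw [Finset.sum_eq_single (G.σX c)]
    · by_cases h : G.σO c < G.σX c ∧ c < G.σO.symm (G.σX c)
      · simp [h]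
      · simp only [if_neg h, ite_eq_right_iff]
        rintro ⟨ha, -, hb⟩
        exact absurd ⟨ha, hb⟩ h
    · intro r _ hr
      simp [hr]
    · simp
  rw [Finset.sum_congr rfl fun c _ => hb1 c, Finset.sum_congr rfl fun c _ => hb2 c]
  have hbr : (G.bridgeIndex : ℤ)
      = (∑ c : Fin n, (if G.σX.symm (G.σO c) < c ∧ G.σO c < G.σX c then (1 : ℤ) else 0))
        + (∑ c : Fin n, (if G.σO.symm (G.σX c) < c ∧ G.σX c < G.σO c then (1 : ℤ) else 0)) := by
    rw [bridgeIndex]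
    push_cast
    rw [cardFilter_int, cardFilter_int]
  rw [hbr]
  have hxc : ∀ c : Fin n, G.σX.symm (G.σO c) ≠ c := by
    intro c h
    exact G.distinct c (by simpa using congrArg G.σX h)
  have hyc : ∀ c : Fin n, G.σO.symm (G.σX c) ≠ c := by
    intro c h
    have h2 := congrArg G.σO h
    simp only [Equiv.apply_symm_apply] at h2
    exact G.distinct c h2.symm
  have hUV : ∀ c : Fin n, (G.σX c < G.σO c) ↔ ¬(G.σO c < G.σX c) := by
    intro c
    constructor
    · exact fun h => asymm h
    · intro h
      exact ((G.distinct c).lt_or_gt.resolve_left h)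
  have hcc : ∀ c : Fin n,
      ((if G.σX c < G.σO c ∧ c < G.σX.symm (G.σO c) then (1 : ℤ) else 0) +
        (if G.σO c < G.σX c ∧ c < G.σO.symm (G.σX c) then 1 else 0))
      = (((if G.σX.symm (G.σO c) < c ∧ G.σO c < G.σX c then 1 else 0) +
          (if G.σO.symm (G.σX c) < c ∧ G.σX c < G.σO c then 1 else 0))
        + (1 - (if G.σX.symm (G.σO c) < c then 1 else 0)
            - (if G.σO.symm (G.σX c) < c then 1 else 0))) :=
    fun c => cellCount (G.σX.symm (G.σO c)) (G.σO.symm (G.σX c)) c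
      (G.σO c < G.σX c) (G.σX c < G.σO c) (hUV c) (hxc c) (hyc c)
  have hsum : (∑ c : Fin n, (if G.σX c < G.σO c ∧ c < G.σX.symm (G.σO c) then (1 : ℤ) else 0))
        + (∑ c : Fin n, (if G.σO c < G.σX c ∧ c < G.σO.symm (G.σX c) then (1 : ℤ) else 0))
      = ((∑ c : Fin n, (if G.σX.symm (G.σO c) < c ∧ G.σO c < G.σX c then (1 : ℤ) else 0))
          + (∑ c : Fin n, (if G.σO.symm (G.σX c) < c ∧ G.σX c < G.σO c then (1 : ℤ) else 0)))
        + ((∑ c : Fin n, (1 : ℤ))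
            - (∑ c : Fin n, (if G.σX.symm (G.σO c) < c then (1 : ℤ) else 0))
            - (∑ c : Fin n, (if G.σO.symm (G.σX c) < c then (1 : ℤ) else 0))) := by
    rw [← Finset.sum_add_distrib, Finset.sum_congr rfl fun c _ => hcc c]
    simp only [Finset.sum_add_distrib, Finset.sum_sub_distrib]
  have hswap : (∑ c : Fin n, (if G.σO.symm (G.σX c) < c then (1 : ℤ) else 0))
      = ∑ c : Fin n, (if c < G.σX.symm (G.σO c) then (1 : ℤ) else 0) := by
    rw [← Equiv.sum_comp (G.σO.trans G.σX.symm)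
      (fun c => if G.σO.symm (G.σX c) < c then (1 : ℤ) else 0)]
    refine Finset.sum_congr rfl fun c _ => ?_
    simp [Equiv.trans_apply]
  have htri : (∑ c : Fin n, (if G.σX.symm (G.σO c) < c then (1 : ℤ) else 0))
        + (∑ c : Fin n, (if c < G.σX.symm (G.σO c) then (1 : ℤ) else 0))
      = ∑ c : Fin n, (1 : ℤ) := by
    rw [← Finset.sum_add_distrib]
    refine Finset.sum_congr rfl fun c _ => ?_
    rcases lt_or_gt_of_ne (hxc c) with h | h <;> simp [h, asymm h]
  rw [hswap] at hsum
  linarith [hsum, htri]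

theorem J_eq_bridgeIndex_sub_writhe :
    G.JOX = (G.bridgeIndex : ℚ) - (G.writhe : ℚ) := by
  have hk := G.key_int
  have hq : G.JOX = ((Icount G.Opoints G.Opoints : ℚ) + (Icount G.Xpoints G.Xpoints : ℚ)
      - (Icount G.Opoints G.Xpoints : ℚ) - (Icount G.Xpoints G.Opoints : ℚ)) := by
    rw [JOX]
    rw [Jcount, Jcount, Jcount]
    ring
  rw [hq]
  have hk2 : (((Icount G.Opoints G.Opoints : ℤ) + (Icount G.Xpoints G.Xpoints : ℤ)
      - (Icount G.Opoints G.Xpoints : ℤ) - (Icount G.Xpoints G.Opoints : ℤ) : ℤ) : ℚ)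
      = (((G.bridgeIndex : ℤ) - G.writhe : ℤ) : ℚ) :=
    congrArg (fun z : ℤ => (z : ℚ)) hk
  push_cast at hk2
  linarith


end PlanarGridDiagram
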